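/- arXiv:2102.09259 — 4 statements merged into one kernel-verified Lean document; each statement's English description precedes it below -/
import Mathlib

section
/- Let κ ≥ 1, d ≥ 1, and 0 < λ̲ < λ̄ < 1, and let α' > 0. Then there exist K ∈ ℕ and τ > 0 such that for any sequence {D_i} in GL(d,ℝ) with λ̲ ≤ m(D_i) ≤ ‖D_i‖ ≤ λ̄ for all i, and such that every block product D_{i+K}⋯D_{i+1} is κ²-conformal, one has (‖D_{i+K}⋯D_{i+1}‖ + τ)^(1+α') ≤ |det(D_{i+K}⋯D_{i+1})|^(1/d) for every i ≥ 0. -/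
/-
The co-norm bound gives `λ̲^K ≤ ‖P‖ ≤ λ̄^K` for a block product `P`, so with `τ = λ̲^K`
we get `(‖P‖ + τ)^(1+α') ≤ 2 ‖P‖ (2 λ̄^K)^α'`, and the factor `2 (2 λ̄^K)^α'` can be made
smaller than `κ⁻²` by taking `K` large. On the other hand `κ²`-conformality bounds the
determinant from below: `|det P⁻¹| ≤ ‖P⁻¹‖^d ≤ (κ² / ‖P‖)^d`, i.e. `‖P‖ ≤ κ² |det P|^(1/d)`.
-/

noncomputable section

abbrev Euc (d : ℕ) := EuclideanSpace ℝ (Fin d)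

/-- An invertible linear map `D` of `ℝ^d` is `κ`-conformal if `‖D‖ · ‖D⁻¹‖ ≤ κ`. -/
def IsConformal {d : ℕ} (κ : ℝ) (D : Euc d ≃L[ℝ] Euc d) : Prop :=
  ‖(D : Euc d →L[ℝ] Euc d)‖ * ‖(D.symm : Euc d →L[ℝ] Euc d)‖ ≤ κ

/-- The co-norm `m(T) = inf {‖T v‖ : ‖v‖ = 1}` of a linear map. -/
def conorm {d : ℕ} (T : Euc d →L[ℝ] Euc d) : ℝ :=
  sInf ((fun v => ‖T v‖) '' {v : Euc d | ‖v‖ = 1})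

/-- `blockProd D i k = D_{i+k} ∘ ⋯ ∘ D_{i+1}`. -/
def blockProd {d : ℕ} (D : ℕ → (Euc d ≃L[ℝ] Euc d)) (i : ℕ) : ℕ → (Euc d ≃L[ℝ] Euc d)
  | 0 => ContinuousLinearEquiv.refl ℝ (Euc d)
  | k + 1 => (blockProd D i k).trans (D (i + k + 1))

/-- Determinant of an invertible continuous linear map. -/
def cdet {d : ℕ} (e : Euc d ≃L[ℝ] Euc d) : ℝ :=
  LinearMap.det ((e : Euc d →L[ℝ] Euc d).toLinearMap)

section FiniteDimensional

open Module MeasureTheory Metric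

variable {E : Type*} [NormedAddCommGroup E] [NormedSpace ℝ E] [FiniteDimensional ℝ E]

/- `g` maps the unit ball into the ball of radius `‖g‖` and multiplies Haar measure by
`|det g|`. -/
theorem abs_det_le_opNorm_pow (g : E →L[ℝ] E) :
    |LinearMap.det (g : E →ₗ[ℝ] E)| ≤ ‖g‖ ^ finrank ℝ E := by
  let _ : MeasurableSpace E := borel E
  have _ : BorelSpace E := ⟨rfl⟩
  let μ : Measure E := Measure.addHaar
  have hB₀ : μ (closedBall 0 1) ≠ 0 := (measure_closedBall_pos μ 0 one_pos).ne'
  have hB : μ (closedBall 0 1) ≠ ⊤ := measure_closedBall_lt_top.ne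
  have himage : g '' closedBall 0 1 ⊆ closedBall 0 (‖g‖ * 1) := by
    rintro _ ⟨v, hv, rfl⟩
    rw [mem_closedBall_zero_iff] at hv ⊢
    exact g.le_opNorm_of_le hv
  have hvol := measure_mono (μ := μ) himage
  rw [Measure.addHaar_image_continuousLinearMap,
    Measure.addHaar_closedBall_mul μ 0 (norm_nonneg g) zero_le_one,
    ENNReal.mul_le_mul_iff_left hB₀ hB] at hvol
  exact (ENNReal.ofReal_le_ofReal_iff (by positivity)).mp hvol

theorem norm_pow_le_mul_abs_det_of_norm_mul_norm_symm_le (P : E ≃L[ℝ] E) {κ : ℝ}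
    (hP : ‖(P : E →L[ℝ] E)‖ * ‖(P.symm : E →L[ℝ] E)‖ ≤ κ) :
    ‖(P : E →L[ℝ] E)‖ ^ finrank ℝ E ≤
      κ ^ finrank ℝ E * |LinearMap.det (P : E →ₗ[ℝ] E)| := by
  set n := finrank ℝ E
  set δ := |LinearMap.det (P : E →ₗ[ℝ] E)|
  have hinv : |LinearMap.det (P.symm : E →ₗ[ℝ] E)| * δ = 1 := by
    rw [← abs_mul, ← LinearMap.det_comp]
    simp
  calc ‖(P : E →L[ℝ] E)‖ ^ n
      = ‖(P : E →L[ℝ] E)‖ ^ n * |LinearMap.det (P.symm : E →ₗ[ℝ] E)| * δ := by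
        rw [mul_assoc, hinv, mul_one]
    _ ≤ ‖(P : E →L[ℝ] E)‖ ^ n * ‖(P.symm : E →L[ℝ] E)‖ ^ n * δ := by
        gcongr
        exact abs_det_le_opNorm_pow (P.symm : E →L[ℝ] E)
    _ = (‖(P : E →L[ℝ] E)‖ * ‖(P.symm : E →L[ℝ] E)‖) ^ n * δ := by rw [mul_pow]
    _ ≤ κ ^ n * δ := by gcongr

end FiniteDimensional

theorem mul_norm_le_norm_apply_of_le_conorm {d : ℕ} {T : Euc d →L[ℝ] Euc d} {c : ℝ}
    (hc : c ≤ conorm T) (w : Euc d) : c * ‖w‖ ≤ ‖T w‖ := by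
  rcases eq_or_ne w 0 with rfl | hw
  · simp
  have hw₀ : 0 < ‖w‖ := norm_pos_iff.mpr hw
  have hunit :
      ‖T ((‖w‖⁻¹ : ℝ) • w)‖ ∈ (fun v => ‖T v‖) '' {v : Euc d | ‖v‖ = 1} :=
    ⟨_, norm_smul_inv_norm hw, rfl⟩
  have hinf : conorm T ≤ ‖w‖⁻¹ * ‖T w‖ := by
    simpa [conorm, map_smul, norm_smul, hw₀.le] using
      csInf_le ⟨0, by rintro _ ⟨v, -, rfl⟩; positivity⟩ hunit
  calc c * ‖w‖ ≤ ‖w‖⁻¹ * ‖T w‖ * ‖w‖ := by gcongr; exact hc.trans hinf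
    _ = ‖T w‖ := by field_simp

section blockProd

variable {d : ℕ} (D : ℕ → (Euc d ≃L[ℝ] Euc d)) (i : ℕ)

theorem coe_blockProd_succ (k : ℕ) :
    (blockProd D i (k + 1) : Euc d →L[ℝ] Euc d) =
      (D (i + k + 1) : Euc d →L[ℝ] Euc d).comp (blockProd D i k : Euc d →L[ℝ] Euc d) := rfl

theorem norm_blockProd_le {lamU : ℝ} (hU : 0 ≤ lamU)
    (hD : ∀ j, ‖(D j : Euc d →L[ℝ] Euc d)‖ ≤ lamU) (k : ℕ) :
    ‖(blockProd D i k : Euc d →L[ℝ] Euc d)‖ ≤ lamU ^ k := by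
  induction k with
  | zero => exact ContinuousLinearMap.norm_id_le
  | succ k ih =>
    rw [coe_blockProd_succ, pow_succ']
    exact (ContinuousLinearMap.opNorm_comp_le _ _).trans
      (mul_le_mul (hD _) ih (norm_nonneg _) hU)

theorem pow_mul_norm_le_norm_blockProd_apply {lamL : ℝ} (hL : 0 ≤ lamL)
    (hD : ∀ j, lamL ≤ conorm (D j : Euc d →L[ℝ] Euc d)) (k : ℕ) (v : Euc d) :
    lamL ^ k * ‖v‖ ≤ ‖(blockProd D i k : Euc d →L[ℝ] Euc d) v‖ := by
  induction k with
  | zero => simp [blockProd]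
  | succ k ih =>
    rw [coe_blockProd_succ, pow_succ', mul_assoc]
    exact (mul_le_mul_of_nonneg_left ih hL).trans
      (mul_norm_le_norm_apply_of_le_conorm (hD _) _)

theorem pow_le_norm_blockProd (hd : 0 < d) {lamL : ℝ} (hL : 0 ≤ lamL)
    (hD : ∀ j, lamL ≤ conorm (D j : Euc d →L[ℝ] Euc d)) (k : ℕ) :
    lamL ^ k ≤ ‖(blockProd D i k : Euc d →L[ℝ] Euc d)‖ := by
  set v : Euc d := EuclideanSpace.single ⟨0, hd⟩ 1
  have hv : ‖v‖ = 1 := by simp [v]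
  simpa [hv] using (pow_mul_norm_le_norm_blockProd_apply D i hL hD k v).trans
    ((blockProd D i k : Euc d →L[ℝ] Euc d).le_opNorm v)

end blockProd

theorem norm_le_mul_abs_cdet_rpow_of_isConformal {d : ℕ} (hd : d ≠ 0) {κ : ℝ}
    (hκ : 0 ≤ κ) {P : Euc d ≃L[ℝ] Euc d} (hP : IsConformal κ P) :
    ‖(P : Euc d →L[ℝ] Euc d)‖ ≤ κ * |cdet P| ^ ((1 : ℝ) / d) := by
  have hpow := norm_pow_le_mul_abs_det_of_norm_mul_norm_symm_le P hP
  rw [finrank_euclideanSpace_fin] at hpow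
  calc ‖(P : Euc d →L[ℝ] Euc d)‖
      = (‖(P : Euc d →L[ℝ] Euc d)‖ ^ d) ^ ((d : ℝ)⁻¹) :=
        (Real.pow_rpow_inv_natCast (norm_nonneg _) hd).symm
    _ ≤ (κ ^ d * |cdet P|) ^ ((d : ℝ)⁻¹) := by gcongr; exact hpow
    _ = κ * |cdet P| ^ ((1 : ℝ) / d) := by
        rw [Real.mul_rpow (by positivity) (abs_nonneg _), Real.pow_rpow_inv_natCast hκ hd,
          one_div]

theorem add_rpow_one_add_le {τ s t α : ℝ} (hτ : 0 ≤ τ) (hτs : τ ≤ s) (hst : s ≤ t)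
    (hα : 0 ≤ α) :
    (s + τ) ^ (1 + α) ≤ 2 * s * (2 * t) ^ α := by
  have hsum : 0 ≤ s + τ := by linarith
  rw [Real.rpow_one_add' hsum (by linarith)]
  exact mul_le_mul (by linarith) (by gcongr; linarith) (by positivity) (by linarith)

open Filter Topology in
theorem stmt5_general (d : ℕ) (hd : 1 ≤ d) (κ lamL lamU α' : ℝ)
    (h0 : 0 < lamL) (h1 : lamL < lamU) (h2 : lamU < 1) (hα' : 0 < α') :
    ∃ (K : ℕ) (τ : ℝ), 1 ≤ K ∧ 0 < τ ∧
      ∀ D : ℕ → (Euc d ≃L[ℝ] Euc d),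
        (∀ i, lamL ≤ conorm (D i : Euc d →L[ℝ] Euc d) ∧
          ‖(D i : Euc d →L[ℝ] Euc d)‖ ≤ lamU) →
        (∀ i : ℕ, IsConformal (κ ^ 2) (blockProd D i K)) →
        ∀ i : ℕ,
          (‖(blockProd D i K : Euc d →L[ℝ] Euc d)‖ + τ) ^ (1 + α') ≤
            |cdet (blockProd D i K)| ^ ((1 : ℝ) / d) := by
  have hU : 0 ≤ lamU := (h0.trans h1).le
  have hsmall : Tendsto (fun K : ℕ => 2 * κ ^ 2 * (2 * lamU ^ K) ^ α') atTop (𝓝 0) := by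
    simpa [Real.zero_rpow hα'.ne'] using
      (((tendsto_pow_atTop_nhds_zero_of_lt_one hU h2).const_mul 2).rpow_const
        (Or.inr hα'.le)).const_mul (2 * κ ^ 2)
  obtain ⟨K, hK, hK1⟩ :=
    ((hsmall.eventually (gt_mem_nhds one_pos)).and (eventually_ge_atTop 1)).exists
  refine ⟨K, lamL ^ K, hK1, pow_pos h0 K, fun D hD hconf i => ?_⟩
  set s := ‖(blockProd D i K : Euc d →L[ℝ] Euc d)‖
  set r := |cdet (blockProd D i K)| ^ ((1 : ℝ) / d)
  have hs_ge : lamL ^ K ≤ s := pow_le_norm_blockProd D i hd h0.le (fun j => (hD j).1) K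
  have hs_le : s ≤ lamU ^ K := norm_blockProd_le D i hU (fun j => (hD j).2) K
  have hs_det : s ≤ κ ^ 2 * r :=
    norm_le_mul_abs_cdet_rpow_of_isConformal (by omega) (sq_nonneg κ) (hconf i)
  calc (s + lamL ^ K) ^ (1 + α')
      ≤ 2 * s * (2 * lamU ^ K) ^ α' := add_rpow_one_add_le (by positivity) hs_ge hs_le hα'.le
    _ ≤ 2 * (κ ^ 2 * r) * (2 * lamU ^ K) ^ α' := by gcongr
    _ = 2 * κ ^ 2 * (2 * lamU ^ K) ^ α' * r := by ring
    _ ≤ r := mul_le_of_le_one_left (by positivity) hK.le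

/-- Given `κ ≥ 1`, `d ≥ 1`, `0 < λ̲ < λ̄ < 1`, `α' > 0`, there are `K ∈ ℕ`,
`τ > 0` such that for any sequence `{D_i}` in `GL(d,ℝ)` with
`λ̲ ≤ m(D_i) ≤ ‖D_i‖ ≤ λ̄` whose `K`-block products `D_{i+K}⋯D_{i+1}` are all
`κ²`-conformal, one has `(‖D_{i+K}⋯D_{i+1}‖ + τ)^(1+α') ≤ |det(D_{i+K}⋯D_{i+1})|^(1/d)`. -/
theorem stmt5 (d : ℕ) (hd : 1 ≤ d) (κ lamL lamU α' : ℝ)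
    (hκ : 1 ≤ κ) (h0 : 0 < lamL) (h1 : lamL < lamU) (h2 : lamU < 1) (hα' : 0 < α') :
    ∃ (K : ℕ) (τ : ℝ), 1 ≤ K ∧ 0 < τ ∧
      ∀ D : ℕ → (Euc d ≃L[ℝ] Euc d),
        (∀ i, lamL ≤ conorm (D i : Euc d →L[ℝ] Euc d) ∧
          ‖(D i : Euc d →L[ℝ] Euc d)‖ ≤ lamU) →
        (∀ i : ℕ, IsConformal (κ ^ 2) (blockProd D i K)) →
        ∀ i : ℕ,
          (‖(blockProd D i K : Euc d →L[ℝ] Euc d)‖ + τ) ^ (1 + α') ≤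
            |cdet (blockProd D i K)| ^ ((1 : ℝ) / d) :=
  stmt5_general d hd κ lamL lamU α' h0 h1 h2 hα'
end
end

section
/- Let C > 0, 0 < λ̄ < 1, α ∈ (0,1). Suppose {D_i}ᵢ₌₁^n in GL(d,ℝ) satisfies ‖D_i‖ ≤ λ̄ for all i, and {y_i}ᵢ₌₀^n in ℝ^d satisfies |y_{i+1} − D_{i+1} y_i| < C|y_i|^(1+α) and |y_0| ≤ (C⁻¹(1−λ̄))^(1/α). Then the sequence |y_i| is non-increasing, and for all i ≥ 0 and k ≥ 1, |D_{i+k}⋯D_{i+1} y_i − y_{i+k}| < C k |y_i|^(1+α). -/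
noncomputable section

/-- If `‖D_i‖ ≤ λ̄ < 1` for `i = 1,…,n` and `{y_i}` satisfies
`|y_{i+1} − D_{i+1} y_i| < C|y_i|^(1+α)` with `|y_0| ≤ (C⁻¹(1−λ̄))^(1/α)`, then `|y_i|` is
non-increasing, and `|D_{i+k}⋯D_{i+1} y_i − y_{i+k}| < C k |y_i|^(1+α)` for all `i ≥ 0`,
`k ≥ 1` (with `i + k ≤ n`). -/
theorem stmt6 (d n : ℕ) (C lamU α : ℝ) (hC : 0 < C) (hlam : 0 < lamU) (hlam1 : lamU < 1)
    (hα : α ∈ Set.Ioo (0 : ℝ) 1)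
    (D : ℕ → (Euc d ≃L[ℝ] Euc d)) (y : ℕ → Euc d)
    (hD : ∀ i, 1 ≤ i → i ≤ n → ‖(D i : Euc d →L[ℝ] Euc d)‖ ≤ lamU)
    (hrec : ∀ i, i + 1 ≤ n → ‖y (i + 1) - D (i + 1) (y i)‖ < C * ‖y i‖ ^ (1 + α))
    (hy0 : ‖y 0‖ ≤ (C⁻¹ * (1 - lamU)) ^ (1 / α)) :
    (∀ i, i + 1 ≤ n → ‖y (i + 1)‖ ≤ ‖y i‖) ∧
    ∀ i k, 1 ≤ k → i + k ≤ n →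
      ‖(blockProd D i k) (y i) - y (i + k)‖ < C * k * ‖y i‖ ^ (1 + α) := by
  obtain ⟨hα0, hα1⟩ := hα
  have hX : 0 < C⁻¹ * (1 - lamU) := mul_pos (inv_pos.2 hC) (by linarith)
  have hBα : ((C⁻¹ * (1 - lamU)) ^ (1 / α)) ^ α = C⁻¹ * (1 - lamU) := by
    rw [← Real.rpow_mul hX.le, one_div, inv_mul_cancel₀ hα0.ne', Real.rpow_one]
  have hpow : ∀ x : ℝ, 0 ≤ x → x ^ (1 + α) = x * x ^ α := by
    intro x hx
    rw [Real.rpow_add' hx (by positivity : (1:ℝ) + α ≠ 0), Real.rpow_one]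
  have step : ∀ i, i + 1 ≤ n → ‖y i‖ ≤ (C⁻¹ * (1 - lamU)) ^ (1 / α) →
      ‖y (i + 1)‖ ≤ ‖y i‖ := by
    intro i hi hle
    have h1 := hrec i hi
    have h2 : ‖(D (i+1)) (y i)‖ ≤ lamU * ‖y i‖ := by
      calc ‖(D (i+1)) (y i)‖ ≤ ‖((D (i+1)) : Euc d →L[ℝ] Euc d)‖ * ‖y i‖ :=
            ((D (i+1)) : Euc d →L[ℝ] Euc d).le_opNorm (y i)
        _ ≤ lamU * ‖y i‖ := by
            have := hD (i+1) (by omega) hi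
            exact mul_le_mul_of_nonneg_right this (norm_nonneg _)
    have hpα : C * ‖y i‖ ^ α ≤ 1 - lamU := by
      have h3 : ‖y i‖ ^ α ≤ ((C⁻¹ * (1 - lamU)) ^ (1 / α)) ^ α :=
        Real.rpow_le_rpow (norm_nonneg _) hle hα0.le
      rw [hBα] at h3
      calc C * ‖y i‖ ^ α ≤ C * (C⁻¹ * (1 - lamU)) :=
            mul_le_mul_of_nonneg_left h3 hC.le
        _ = 1 - lamU := by field_simp
    have h4 : ‖y (i+1)‖ ≤ ‖y (i+1) - D (i+1) (y i)‖ + ‖D (i+1) (y i)‖ := by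
      have := norm_add_le (y (i+1) - D (i+1) (y i)) (D (i+1) (y i))
      simpa using this
    have h5 : C * ‖y i‖ ^ (1 + α) ≤ (1 - lamU) * ‖y i‖ := by
      rw [hpow _ (norm_nonneg _)]
      calc C * (‖y i‖ * ‖y i‖ ^ α) = (C * ‖y i‖ ^ α) * ‖y i‖ := by ring
        _ ≤ (1 - lamU) * ‖y i‖ := mul_le_mul_of_nonneg_right hpα (norm_nonneg _)
    nlinarith [norm_nonneg (y i)]
  have hbd : ∀ i, i ≤ n → ‖y i‖ ≤ (C⁻¹ * (1 - lamU)) ^ (1 / α) := by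
    intro i
    induction i with
    | zero => intro _; exact hy0
    | succ m ih =>
      intro h
      exact le_trans (step m h (ih (by omega))) (ih (by omega))
  have mono : ∀ i, i + 1 ≤ n → ‖y (i + 1)‖ ≤ ‖y i‖ :=
    fun i hi => step i hi (hbd i (by omega))
  have chain : ∀ i k, i + k ≤ n → ‖y (i + k)‖ ≤ ‖y i‖ := by
    intro i k
    induction k with
    | zero => intro _; simp
    | succ m ih =>
      intro h
      exact le_trans (mono (i + m) (by omega)) (ih (by omega))
  refine ⟨mono, ?_⟩
  intro i k hk hik
  induction k, hk using Nat.le_induction with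
  | base =>
    have := hrec i hik
    rw [norm_sub_rev] at this
    simpa [blockProd] using this
  | succ k hk ih =>
    have hik' : i + k ≤ n := by omega
    have ih' := ih hik'
    have hrec' := hrec (i + k) (by omega)
    have hD' := hD (i + k + 1) (by omega) (by omega)
    have hsplit : (blockProd D i (k+1)) (y i) - y (i + (k+1))
        = (D (i+k+1)) ((blockProd D i k) (y i) - y (i+k))
          + ((D (i+k+1)) (y (i+k)) - y (i+k+1)) := by
      show (blockProd D i k).trans (D (i + k + 1)) (y i) - y (i + k + 1) = _
      rw [ContinuousLinearEquiv.trans_apply, map_sub]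
      abel
    have hterm1 : ‖(D (i+k+1)) ((blockProd D i k) (y i) - y (i+k))‖
        < C * k * ‖y i‖ ^ (1 + α) := by
      calc ‖(D (i+k+1)) ((blockProd D i k) (y i) - y (i+k))‖
          ≤ ‖((D (i+k+1)) : Euc d →L[ℝ] Euc d)‖ * ‖(blockProd D i k) (y i) - y (i+k)‖ :=
            ((D (i+k+1)) : Euc d →L[ℝ] Euc d).le_opNorm _
        _ ≤ 1 * ‖(blockProd D i k) (y i) - y (i+k)‖ :=
            mul_le_mul_of_nonneg_right (le_trans hD' hlam1.le) (norm_nonneg _)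
        _ = ‖(blockProd D i k) (y i) - y (i+k)‖ := one_mul _
        _ < C * k * ‖y i‖ ^ (1 + α) := ih'
    have hterm2 : ‖(D (i+k+1)) (y (i+k)) - y (i+k+1)‖ ≤ C * ‖y i‖ ^ (1 + α) := by
      rw [norm_sub_rev]
      refine le_trans hrec'.le ?_
      have hmon : ‖y (i+k)‖ ^ (1 + α) ≤ ‖y i‖ ^ (1 + α) :=
        Real.rpow_le_rpow (norm_nonneg _) (chain i k hik') (by linarith)
      exact mul_le_mul_of_nonneg_left hmon hC.le
    calc ‖(blockProd D i (k+1)) (y i) - y (i + (k+1))‖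
        ≤ ‖(D (i+k+1)) ((blockProd D i k) (y i) - y (i+k))‖
          + ‖(D (i+k+1)) (y (i+k)) - y (i+k+1)‖ := by rw [hsplit]; exact norm_add_le _ _
      _ < C * k * ‖y i‖ ^ (1 + α) + C * ‖y i‖ ^ (1 + α) := by linarith
      _ = C * (k+1 : ℕ) * ‖y i‖ ^ (1 + α) := by push_cast; ring
end
end

section
/- (Key Lemma) Let C > 0, κ ≥ 1 > λ̄ > λ̲ > 0, α ∈ (0,1). Then there exist ξ₁, γ > 0 such that for any n ∈ ℕ, any sequence {D_i}ᵢ₌₁^n in GL(d,ℝ) satisfying (C1) λ̲ ≤ m(D_i) ≤ ‖D_i‖ ≤ λ̄ < 1 for all i, and (C2) ‖D_i⋯D_1‖/m(D_i⋯D_1) ≤ κ for all i, and any sequence {y_i}ᵢ₌₀^n in ℝ^d with |y_0| ≤ ξ₁ and |y_{i+1} − D_{i+1}y_i| < C|y_i|^(1+α), one has |y_n − D_n⋯D_1 y_0| < γ|det(D_n⋯D_1)|^(1/d)|y_0|^(1+α). -/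
noncomputable section

/-!
Write `P_k = D_k ⋯ D_1` and `m_k = m(P_k)`, and pull the orbit back by `P_k`: the vector
`z_k = P_k⁻¹ y_k - y_0` starts at `0`, and its increment `P_{k+1}⁻¹ (y_{k+1} - D_{k+1} y_k)` has
norm at most `C |y_k|^(1+α) / m_{k+1}`. As long as `|z_k| ≤ |y_0|`, (C2) gives
`|y_k| ≤ 2κ m_k |y_0|`; with `m_{k+1} ≥ λ̲ m_k` and `m_k ≤ λ̄^k` the increment is
`O(λ̄^(αk) |y_0|^(1+α))`. These sum to `O(|y_0|^(1+α))`, which is at most `|y_0|` once `|y_0|` is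
small, so the bound on `z_k` propagates. Finally `y_n - P_n y_0 = P_n z_n` has norm at most
`κ m_n |z_n|`, and `m_n ≤ |det P_n|^(1/d)` because `|det P_n⁻¹| ≤ ‖P_n⁻¹‖^d ≤ m_n^(-d)`.
-/

open MeasureTheory

theorem abs_det_le_opNorm_pow_s7 {E : Type*} [NormedAddCommGroup E] [NormedSpace ℝ E]
    [FiniteDimensional ℝ E] (f : E →L[ℝ] E) :
    |LinearMap.det (f : E →ₗ[ℝ] E)| ≤ ‖f‖ ^ Module.finrank ℝ E := by
  borelize E
  set μ : Measure E := Measure.addHaar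
  have hB0 : μ (Metric.closedBall 0 1) ≠ 0 := (Metric.measure_closedBall_pos μ 0 one_pos).ne'
  have hBtop : μ (Metric.closedBall 0 1) ≠ ⊤ := measure_closedBall_lt_top.ne
  -- compare volumes, using `vol (f B) = |det f| vol B`
  have himage : f '' Metric.closedBall 0 1 ⊆ Metric.closedBall 0 ‖f‖ := by
    rintro _ ⟨v, hv, rfl⟩
    rw [mem_closedBall_zero_iff] at hv ⊢
    exact f.le_of_opNorm_le le_rfl v |>.trans (mul_le_of_le_one_right (norm_nonneg f) hv)
  have h := measure_mono (μ := μ) himage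
  rw [Measure.addHaar_image_continuousLinearMap, Measure.addHaar_closedBall' μ _ (norm_nonneg f),
    ENNReal.mul_le_mul_iff_left hB0 hBtop] at h
  exact (ENNReal.ofReal_le_ofReal_iff (by positivity)).1 h

theorem norm_le_of_norm_sub_succ_le_geometric {E : Type*} [SeminormedAddCommGroup E]
    {z : ℕ → E} {n : ℕ} {c β : ℝ} (hc : 0 ≤ c) (hβ0 : 0 ≤ β) (hβ1 : β < 1) (h0 : z 0 = 0)
    (hstep : ∀ k < n, ‖z k‖ ≤ c / (1 - β) → ‖z (k + 1) - z k‖ ≤ c * β ^ k) :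
    ∀ k ≤ n, ‖z k‖ ≤ c / (1 - β) := by
  have hgeom : ∀ k, c * ∑ j ∈ Finset.range k, β ^ j ≤ c / (1 - β) := fun k => by
    have := geom_sum_Ico_le_of_lt_one (m := 0) (n := k) hβ0 hβ1
    rw [pow_zero, ← Finset.range_eq_Ico] at this
    rw [← mul_one_div]
    gcongr
  suffices h : ∀ k ≤ n, ‖z k‖ ≤ c * ∑ j ∈ Finset.range k, β ^ j from
    fun k hk => (h k hk).trans (hgeom k)
  intro k hk
  induction k with
  | zero => simp [h0]
  | succ k ih =>
    have ihk := ih (by omega)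
    calc ‖z (k + 1)‖ ≤ ‖z k‖ + ‖z (k + 1) - z k‖ := norm_le_norm_add_norm_sub' _ _
      _ ≤ c * ∑ j ∈ Finset.range k, β ^ j + c * β ^ k :=
        add_le_add ihk (hstep k hk (ihk.trans (hgeom k)))
      _ = c * ∑ j ∈ Finset.range (k + 1), β ^ j := by rw [Finset.sum_range_succ, mul_add]

section Conorm

variable {d : ℕ}

theorem exists_norm_eq_one (hd : 1 ≤ d) : ∃ v : Euc d, ‖v‖ = 1 :=
  ⟨EuclideanSpace.single ⟨0, hd⟩ 1, by simp⟩

theorem conorm_nonneg (T : Euc d →L[ℝ] Euc d) : 0 ≤ conorm T :=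
  Real.sInf_nonneg (by rintro _ ⟨v, -, rfl⟩; positivity)

theorem conorm_le_norm_apply (T : Euc d →L[ℝ] Euc d) {v : Euc d} (hv : ‖v‖ = 1) :
    conorm T ≤ ‖T v‖ :=
  csInf_le ⟨0, by rintro _ ⟨w, -, rfl⟩; positivity⟩ ⟨v, hv, rfl⟩

theorem le_conorm (hd : 1 ≤ d) {T : Euc d →L[ℝ] Euc d} {c : ℝ}
    (h : ∀ v : Euc d, ‖v‖ = 1 → c ≤ ‖T v‖) : c ≤ conorm T := by
  obtain ⟨v, hv⟩ := exists_norm_eq_one hd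
  exact le_csInf ⟨_, v, hv, rfl⟩ (by rintro _ ⟨w, hw, rfl⟩; exact h w hw)

theorem conorm_mul_norm_le (T : Euc d →L[ℝ] Euc d) (v : Euc d) : conorm T * ‖v‖ ≤ ‖T v‖ := by
  rcases eq_or_ne v 0 with rfl | hv
  · simp
  have hunit : ‖‖v‖⁻¹ • v‖ = 1 := by
    rw [norm_smul, norm_inv, norm_norm, inv_mul_cancel₀ (norm_ne_zero_iff.2 hv)]
  have h := conorm_le_norm_apply T hunit
  rw [map_smul, norm_smul, norm_inv, norm_norm, inv_mul_eq_div,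
    le_div_iff₀ (norm_pos_iff.2 hv)] at h
  exact h

theorem conorm_le_opNorm (hd : 1 ≤ d) (T : Euc d →L[ℝ] Euc d) : conorm T ≤ ‖T‖ := by
  obtain ⟨v, hv⟩ := exists_norm_eq_one hd
  simpa [hv] using (conorm_le_norm_apply T hv).trans (T.le_opNorm v)

theorem conorm_id (hd : 1 ≤ d) : conorm (ContinuousLinearMap.id ℝ (Euc d)) = 1 :=
  le_antisymm ((conorm_le_opNorm hd _).trans ContinuousLinearMap.norm_id_le)
    (le_conorm hd fun v hv => by simp [hv])

theorem conorm_mul_conorm_le_conorm_comp (hd : 1 ≤ d) (S T : Euc d →L[ℝ] Euc d) :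
    conorm T * conorm S ≤ conorm (S.comp T) :=
  le_conorm hd fun v hv =>
    calc conorm T * conorm S = conorm S * (conorm T * ‖v‖) := by rw [hv]; ring
      _ ≤ conorm S * ‖T v‖ := by gcongr; exacts [conorm_nonneg S, conorm_mul_norm_le T v]
      _ ≤ ‖S (T v)‖ := conorm_mul_norm_le S (T v)

theorem conorm_mul_norm_symm_apply_le (e : Euc d ≃L[ℝ] Euc d) (w : Euc d) :
    conorm (e : Euc d →L[ℝ] Euc d) * ‖e.symm w‖ ≤ ‖w‖ := by
  simpa using conorm_mul_norm_le (e : Euc d →L[ℝ] Euc d) (e.symm w)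

theorem opNorm_symm_le_inv_conorm (e : Euc d ≃L[ℝ] Euc d)
    (he : 0 < conorm (e : Euc d →L[ℝ] Euc d)) :
    ‖(e.symm : Euc d →L[ℝ] Euc d)‖ ≤ (conorm (e : Euc d →L[ℝ] Euc d))⁻¹ :=
  ContinuousLinearMap.opNorm_le_bound _ (inv_nonneg.2 he.le) fun w => by
    rw [inv_mul_eq_div, le_div_iff₀' he]
    exact conorm_mul_norm_symm_apply_le e w

theorem cdet_mul_cdet_symm (e : Euc d ≃L[ℝ] Euc d) : cdet e * cdet e.symm = 1 :=
  e.toLinearEquiv.det_mul_det_symm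

theorem cdet_ne_zero (e : Euc d ≃L[ℝ] Euc d) : cdet e ≠ 0 :=
  left_ne_zero_of_mul_eq_one (cdet_mul_cdet_symm e)

theorem conorm_le_abs_cdet_rpow (hd : 1 ≤ d) (e : Euc d ≃L[ℝ] Euc d)
    (he : 0 < conorm (e : Euc d →L[ℝ] Euc d)) :
    conorm (e : Euc d →L[ℝ] Euc d) ≤ |cdet e| ^ ((1 : ℝ) / d) := by
  set m := conorm (e : Euc d →L[ℝ] Euc d)
  have hsymm : |cdet e.symm| ≤ (m ^ d)⁻¹ := by
    rw [← inv_pow]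
    refine (abs_det_le_opNorm_pow_s7 _).trans ?_
    rw [finrank_euclideanSpace_fin]
    gcongr
    exact opNorm_symm_le_inv_conorm e he
  have hprod : |cdet e| * |cdet e.symm| = 1 := by rw [← abs_mul, cdet_mul_cdet_symm, abs_one]
  have hdet : 0 < |cdet e| := abs_pos.2 (cdet_ne_zero e)
  have hpow : m ^ d ≤ |cdet e| := by
    rw [← inv_le_inv₀ hdet (by positivity), ← eq_inv_of_mul_eq_one_right hprod]
    exact hsymm
  calc m = (m ^ d) ^ ((1 : ℝ) / d) := by
        rw [one_div, Real.pow_rpow_inv_natCast he.le (by omega)]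
    _ ≤ |cdet e| ^ ((1 : ℝ) / d) := by gcongr

end Conorm

section BlockProd

variable {d : ℕ} (D : ℕ → (Euc d ≃L[ℝ] Euc d))

theorem blockProd_zero_succ (i : ℕ) :
    blockProd D 0 (i + 1) = (blockProd D 0 i).trans (D (i + 1)) := by
  rw [blockProd, zero_add]

theorem coe_blockProd_zero_succ (i : ℕ) :
    (blockProd D 0 (i + 1) : Euc d →L[ℝ] Euc d) =
      (D (i + 1) : Euc d →L[ℝ] Euc d).comp (blockProd D 0 i : Euc d →L[ℝ] Euc d) := by
  rw [blockProd_zero_succ, ContinuousLinearEquiv.comp_coe]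

theorem opNorm_blockProd_le_pow {n : ℕ} {lam : ℝ}
    (hD : ∀ i, 1 ≤ i → i ≤ n → ‖(D i : Euc d →L[ℝ] Euc d)‖ ≤ lam) :
    ∀ i ≤ n, ‖(blockProd D 0 i : Euc d →L[ℝ] Euc d)‖ ≤ lam ^ i := by
  intro i hi
  induction i with
  | zero => simpa [blockProd] using ContinuousLinearMap.norm_id_le
  | succ k ih =>
    have hDk := hD (k + 1) (by omega) hi
    rw [coe_blockProd_zero_succ, pow_succ']
    exact (ContinuousLinearMap.opNorm_comp_le _ _).trans
      (mul_le_mul hDk (ih (by omega)) (norm_nonneg _) ((norm_nonneg _).trans hDk))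

theorem pow_le_conorm_blockProd (hd : 1 ≤ d) {n : ℕ} {lam : ℝ} (hlam : 0 ≤ lam)
    (hD : ∀ i, 1 ≤ i → i ≤ n → lam ≤ conorm (D i : Euc d →L[ℝ] Euc d)) :
    ∀ i ≤ n, lam ^ i ≤ conorm (blockProd D 0 i : Euc d →L[ℝ] Euc d) := by
  intro i hi
  induction i with
  | zero => simp [blockProd, conorm_id hd]
  | succ k ih =>
    rw [coe_blockProd_zero_succ, pow_succ]
    exact (mul_le_mul (ih (by omega)) (hD (k + 1) (by omega) hi) hlam (conorm_nonneg _)).trans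
      (conorm_mul_conorm_le_conorm_comp hd _ _)

end BlockProd

theorem norm_le_two_mul_opNorm_mul {d : ℕ} (e : Euc d ≃L[ℝ] Euc d) {y y₀ : Euc d}
    (hz : ‖e.symm y - y₀‖ ≤ ‖y₀‖) : ‖y‖ ≤ 2 * ‖(e : Euc d →L[ℝ] Euc d)‖ * ‖y₀‖ :=
  calc ‖y‖ = ‖(e : Euc d →L[ℝ] Euc d) (e.symm y)‖ := by simp
    _ ≤ ‖(e : Euc d →L[ℝ] Euc d)‖ * (‖y₀‖ + ‖e.symm y - y₀‖) := by
      grw [ContinuousLinearMap.le_opNorm, norm_le_norm_add_norm_sub' (e.symm y) y₀]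
    _ ≤ 2 * ‖(e : Euc d →L[ℝ] Euc d)‖ * ‖y₀‖ := by nlinarith [norm_nonneg (e : Euc d →L[ℝ] Euc d)]

theorem norm_symm_trans_sub_symm_le {d : ℕ} (hd : 1 ≤ d) (e f : Euc d ≃L[ℝ] Euc d) {y y' y₀ : Euc d}
    {C κ lam μ α : ℝ} (hC : 0 ≤ C) (hα : 0 ≤ α) (hlam : 0 < lam)
    (he : 0 < conorm (e : Euc d →L[ℝ] Euc d)) (hf : lam ≤ conorm (f : Euc d →L[ℝ] Euc d))
    (heκ : ‖(e : Euc d →L[ℝ] Euc d)‖ ≤ κ * conorm (e : Euc d →L[ℝ] Euc d))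
    (heμ : conorm (e : Euc d →L[ℝ] Euc d) ≤ μ) (hstep : ‖y' - f y‖ ≤ C * ‖y‖ ^ (1 + α))
    (hz : ‖e.symm y - y₀‖ ≤ ‖y₀‖) :
    ‖(e.trans f).symm y' - e.symm y‖ ≤ C * (2 * κ) ^ (1 + α) / lam * μ ^ α * ‖y₀‖ ^ (1 + α) := by
  set m := conorm (e : Euc d →L[ℝ] Euc d)
  have hκ : 0 ≤ κ := nonneg_of_mul_nonneg_left ((norm_nonneg _).trans heκ) he
  have hy : ‖y‖ ≤ 2 * κ * (m * ‖y₀‖) :=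
    calc ‖y‖ ≤ 2 * ‖(e : Euc d →L[ℝ] Euc d)‖ * ‖y₀‖ := norm_le_two_mul_opNorm_mul e hz
      _ ≤ 2 * (κ * m) * ‖y₀‖ := by gcongr
      _ = 2 * κ * (m * ‖y₀‖) := by ring
  have hpow : ‖y‖ ^ (1 + α) ≤ (2 * κ) ^ (1 + α) * (m * μ ^ α) * ‖y₀‖ ^ (1 + α) :=
    calc ‖y‖ ^ (1 + α) ≤ (2 * κ * (m * ‖y₀‖)) ^ (1 + α) := by gcongr
      _ = (2 * κ) ^ (1 + α) * (m * m ^ α) * ‖y₀‖ ^ (1 + α) := by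
        rw [Real.mul_rpow (by positivity) (by positivity), Real.mul_rpow he.le (by positivity),
          Real.rpow_add he, Real.rpow_one]
        ring
      _ ≤ (2 * κ) ^ (1 + α) * (m * μ ^ α) * ‖y₀‖ ^ (1 + α) := by gcongr
  have htrans : lam * m ≤ conorm ((e.trans f : Euc d ≃L[ℝ] Euc d) : Euc d →L[ℝ] Euc d) := by
    rw [mul_comm, ← ContinuousLinearEquiv.comp_coe]
    exact (mul_le_mul_of_nonneg_left hf he.le).trans (conorm_mul_conorm_le_conorm_comp hd _ _)
  have hdiff : (e.trans f).symm y' - e.symm y = (e.trans f).symm (y' - f y) := by simp [map_sub]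
  rw [hdiff]
  refine le_of_mul_le_mul_left ?_ (mul_pos hlam he)
  calc lam * m * ‖(e.trans f).symm (y' - f y)‖
      ≤ conorm ((e.trans f : Euc d ≃L[ℝ] Euc d) : Euc d →L[ℝ] Euc d) *
          ‖(e.trans f).symm (y' - f y)‖ := by gcongr
    _ ≤ C * ‖y‖ ^ (1 + α) := (conorm_mul_norm_symm_apply_le _ _).trans hstep
    _ ≤ C * ((2 * κ) ^ (1 + α) * (m * μ ^ α) * ‖y₀‖ ^ (1 + α)) := by gcongr
    _ = lam * m * (C * (2 * κ) ^ (1 + α) / lam * μ ^ α * ‖y₀‖ ^ (1 + α)) := by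
      field_simp

theorem norm_sub_blockProd_apply_le {d : ℕ} (hd : 1 ≤ d) {n : ℕ} {D : ℕ → (Euc d ≃L[ℝ] Euc d)}
    {y : ℕ → Euc d} {C κ lamL lamU α : ℝ} (hC : 0 ≤ C) (hκ : 1 ≤ κ) (hlamL : 0 < lamL)
    (hlamU0 : 0 ≤ lamU) (hlamU : lamU < 1) (hα : 0 < α)
    (hD : ∀ i, 1 ≤ i → i ≤ n →
      lamL ≤ conorm (D i : Euc d →L[ℝ] Euc d) ∧ ‖(D i : Euc d →L[ℝ] Euc d)‖ ≤ lamU)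
    (hQ : ∀ i, 1 ≤ i → i ≤ n →
      ‖(blockProd D 0 i : Euc d →L[ℝ] Euc d)‖ ≤ κ * conorm (blockProd D 0 i : Euc d →L[ℝ] Euc d))
    (hy : ∀ i, i + 1 ≤ n → ‖y (i + 1) - D (i + 1) (y i)‖ ≤ C * ‖y i‖ ^ (1 + α))
    (hsmall : C * (2 * κ) ^ (1 + α) / lamL / (1 - lamU ^ α) * ‖y 0‖ ^ (1 + α) ≤ ‖y 0‖) :
    ‖y n - blockProd D 0 n (y 0)‖ ≤ κ * (C * (2 * κ) ^ (1 + α) / lamL / (1 - lamU ^ α)) *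
      |cdet (blockProd D 0 n)| ^ ((1 : ℝ) / d) * ‖y 0‖ ^ (1 + α) := by
  have hconorm : ∀ k ≤ n, 0 < conorm (blockProd D 0 k : Euc d →L[ℝ] Euc d) := fun k hk =>
    (pow_pos hlamL k).trans_le
      (pow_le_conorm_blockProd D hd hlamL.le (fun i h1 h2 => (hD i h1 h2).1) k hk)
  have hnorm := opNorm_blockProd_le_pow D (fun i h1 h2 => (hD i h1 h2).2)
  have hQ₀ : ∀ k ≤ n, ‖(blockProd D 0 k : Euc d →L[ℝ] Euc d)‖ ≤
      κ * conorm (blockProd D 0 k : Euc d →L[ℝ] Euc d) := by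
    intro k hk
    rcases Nat.eq_zero_or_pos k with rfl | hk0
    · simpa [blockProd, conorm_id hd] using ContinuousLinearMap.norm_id_le.trans hκ
    · exact hQ k hk0 hk
  have hz := norm_le_of_norm_sub_succ_le_geometric
    (z := fun k => (blockProd D 0 k).symm (y k) - y 0) (n := n)
    (c := C * (2 * κ) ^ (1 + α) / lamL * ‖y 0‖ ^ (1 + α)) (by positivity)
    (Real.rpow_nonneg hlamU0 α) (Real.rpow_lt_one hlamU0 hlamU hα) (by simp [blockProd])
    fun k hk hzk => by
      have h := norm_symm_trans_sub_symm_le hd (blockProd D 0 k) (D (k + 1)) hC hα.le hlamL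
        (hconorm k hk.le) (hD (k + 1) (by omega) hk).1 (hQ₀ k hk.le)
        ((conorm_le_opNorm hd _).trans (hnorm k hk.le)) (hy k hk) (hzk.trans (hsmall.trans_eq' (by ring)))
      rw [← blockProd_zero_succ, ← Real.rpow_pow_comm hlamU0] at h
      rw [sub_sub_sub_cancel_right]
      exact h.trans_eq (by ring)
  calc ‖y n - blockProd D 0 n (y 0)‖
      = ‖(blockProd D 0 n : Euc d →L[ℝ] Euc d) ((blockProd D 0 n).symm (y n) - y 0)‖ := by
        simp [map_sub]
    _ ≤ κ * conorm (blockProd D 0 n : Euc d →L[ℝ] Euc d) *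
        (C * (2 * κ) ^ (1 + α) / lamL * ‖y 0‖ ^ (1 + α) / (1 - lamU ^ α)) :=
      (ContinuousLinearMap.le_opNorm _ _).trans
        (mul_le_mul (hQ₀ n le_rfl) (hz n le_rfl) (norm_nonneg _)
          (mul_nonneg (by linarith) (conorm_nonneg _)))
    _ ≤ κ * |cdet (blockProd D 0 n)| ^ ((1 : ℝ) / d) *
        (C * (2 * κ) ^ (1 + α) / lamL * ‖y 0‖ ^ (1 + α) / (1 - lamU ^ α)) := by
      gcongr
      · exact (norm_nonneg _).trans (hz n le_rfl)
      · exact conorm_le_abs_cdet_rpow hd _ (hconorm n le_rfl)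
    _ = _ := by ring

/-- Key Lemma: Given `C > 0`, `κ ≥ 1 > λ̄ > λ̲ > 0`, `α ∈ (0,1)`, there exist
`ξ₁, γ > 0` such that for any `n`, any sequence `{D_i}` in `GL(d,ℝ)` satisfying the
contraction condition (C1) and the quasi-conformality condition (C2), and any sequence
`{y_i}` with `|y_0| ≤ ξ₁` and `|y_{i+1} − D_{i+1} y_i| < C|y_i|^(1+α)`, one has
`|y_n − D_n⋯D_1 y_0| < γ |det(D_n⋯D_1)|^(1/d) |y_0|^(1+α)`. -/
theorem stmt7 (d : ℕ) (hd : 1 ≤ d) (C κ lamL lamU α : ℝ)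
    (hC : 0 < C) (hκ : 1 ≤ κ) (hlamU : lamU < 1) (hlam : lamL < lamU) (hlamL : 0 < lamL)
    (hα : α ∈ Set.Ioo (0 : ℝ) 1) :
    ∃ ξ₁ γ : ℝ, 0 < ξ₁ ∧ 0 < γ ∧
      ∀ (n : ℕ), 1 ≤ n → ∀ (D : ℕ → (Euc d ≃L[ℝ] Euc d)) (y : ℕ → Euc d),
        (∀ i, 1 ≤ i → i ≤ n →
          lamL ≤ conorm (D i : Euc d →L[ℝ] Euc d) ∧
            ‖(D i : Euc d →L[ℝ] Euc d)‖ ≤ lamU) →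
        (∀ i, 1 ≤ i → i ≤ n →
          ‖(blockProd D 0 i : Euc d →L[ℝ] Euc d)‖ ≤
            κ * conorm (blockProd D 0 i : Euc d →L[ℝ] Euc d)) →
        ‖y 0‖ ≤ ξ₁ →
        (∀ i, i + 1 ≤ n → ‖y (i + 1) - D (i + 1) (y i)‖ < C * ‖y i‖ ^ (1 + α)) →
        ‖y n - (blockProd D 0 n) (y 0)‖ <
          γ * |cdet (blockProd D 0 n)| ^ ((1 : ℝ) / d) * ‖y 0‖ ^ (1 + α) := by
  obtain ⟨hα0, -⟩ := hα
  have hlamU0 : 0 < lamU := hlamL.trans hlam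
  have hκ0 : 0 < κ := one_pos.trans_le hκ
  set K := C * (2 * κ) ^ (1 + α) / lamL / (1 - lamU ^ α)
  have hK : 0 < K := div_pos (by positivity) (sub_pos.2 (Real.rpow_lt_one hlamU0.le hlamU hα0))
  refine ⟨K⁻¹ ^ α⁻¹, κ * K + 1, by positivity, by positivity, ?_⟩
  intro n hn D y hD hQ hy0 hy
  have hr : 0 < ‖y 0‖ := norm_pos_iff.2 fun h0 =>
    (norm_nonneg _).not_gt (by simpa [h0, Real.zero_rpow (by linarith : 1 + α ≠ 0)] using hy 0 hn)
  have hsmall : K * ‖y 0‖ ^ (1 + α) ≤ ‖y 0‖ := by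
    have hrα : ‖y 0‖ ^ α ≤ K⁻¹ := by
      have h := Real.rpow_le_rpow hr.le hy0 hα0.le
      rwa [Real.rpow_inv_rpow (inv_nonneg.2 hK.le) hα0.ne'] at h
    calc K * ‖y 0‖ ^ (1 + α) = K * ‖y 0‖ ^ α * ‖y 0‖ := by
          rw [Real.rpow_add hr, Real.rpow_one]; ring
      _ ≤ K * K⁻¹ * ‖y 0‖ := by gcongr
      _ = ‖y 0‖ := by rw [mul_inv_cancel₀ hK.ne', one_mul]
  have hdet : 0 < |cdet (blockProd D 0 n)| ^ ((1 : ℝ) / d) :=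
    Real.rpow_pos_of_pos (abs_pos.2 (cdet_ne_zero _)) _
  calc ‖y n - blockProd D 0 n (y 0)‖
      ≤ κ * K * |cdet (blockProd D 0 n)| ^ ((1 : ℝ) / d) * ‖y 0‖ ^ (1 + α) :=
        norm_sub_blockProd_apply_le hd hC.le hκ hlamL hlamU0.le hlamU hα0 hD hQ
          (fun i hi => (hy i hi).le) hsmall
    _ < (κ * K + 1) * |cdet (blockProd D 0 n)| ^ ((1 : ℝ) / d) * ‖y 0‖ ^ (1 + α) := by
        gcongr
        exact lt_add_one _
end
end

section
/- Let Δ ⊂ ℝ^N be the open convex hull of N+1 (or more generally finitely many) unit vectors v₁,…,v_N whose convex hull contains the origin in its interior. Then for all sufficiently small t > 0 there exists c > 0 such that closure(Δ) ⊆ ∪ᵢ₌₁^N (Δ + t vᵢ)_c, where U_c := {x ∈ U : dist(x, ∂U) > c}. Moreover this covering is invariant under homothety: for every r > 0, closure(rΔ) ⊆ ∪ᵢ (rΔ + tr vᵢ)_{cr}. -/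
open scoped Pointwise

noncomputable section

/-- `shrinkSet U c = U_c := {x ∈ U : dist(x, ∂U) > c}`. -/
def shrinkSet {N : ℕ} (U : Set (Euc N)) (c : ℝ) : Set (Euc N) :=
  {x ∈ U | c < Metric.infDist x (frontier U)}

/-!
A point `x` of `closure Δ = conv (range v)` is a convex combination of the `vᵢ` in which some
weight is at least `1 / m`, hence at least `t`; splitting `t • vᵢ` off gives
`x - t • vᵢ = (1 - t) • p` with `p ∈ conv (range v)`. If `ball 0 ε ⊆ Δ`, convexity gives
`ball ((1 - t) • p) (t * ε) ⊆ conv (range v)`, so `ball x (t * ε)` lies in `Δ + t • vᵢ` and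
`c = t * ε / 2` works. Dilating by `r` multiplies all distances by `r`.
-/

open Set Metric

section Simplex

variable {ι : Type*} [Fintype ι]

theorem convexHull_range_eq_image_stdSimplex {E : Type*} [AddCommGroup E] [Module ℝ E]
    (v : ι → E) :
    convexHull ℝ (range v) = Fintype.linearCombination ℝ v '' stdSimplex ℝ ι := by
  classical
  rw [← convexHull_rangle_single_eq_stdSimplex, LinearMap.image_convexHull, ← range_comp]
  congr
  funext i
  simp [Fintype.linearCombination_apply, Pi.single_apply]

theorem exists_inv_card_le_of_mem_stdSimplex {w : ι → ℝ} (hw : w ∈ stdSimplex ℝ ι) :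
    ∃ i, (Fintype.card ι : ℝ)⁻¹ ≤ w i := by
  have hne : (Finset.univ : Finset ι).Nonempty :=
    Finset.nonempty_of_sum_ne_zero (hw.2 ▸ one_ne_zero)
  have : Nonempty ι := Finset.univ_nonempty_iff.1 hne
  obtain ⟨i, -, hi⟩ := Finset.exists_le_of_sum_le hne
    (f := fun _ => (Fintype.card ι : ℝ)⁻¹) (g := w) (by simp [hw.2])
  exact ⟨i, hi⟩

theorem exists_mem_stdSimplex_eq_smul_add_single {w : ι → ℝ} (hw : w ∈ stdSimplex ℝ ι)
    [DecidableEq ι] {i : ι} {t : ℝ} (hti : t ≤ w i) (ht : t < 1) :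
    ∃ w' ∈ stdSimplex ℝ ι, w = (1 - t) • w' + t • Pi.single i 1 := by
  have h1t : 0 < 1 - t := sub_pos.2 ht
  refine ⟨(1 - t)⁻¹ • (w - t • Pi.single i 1), ⟨fun j => ?_, ?_⟩, ?_⟩
  · refine mul_nonneg (inv_nonneg.2 h1t.le) ?_
    rcases eq_or_ne j i with rfl | hj
    · simpa using hti
    · simpa [hj] using hw.1 j
  · simp [← Finset.mul_sum, Finset.sum_sub_distrib, hw.2, h1t.ne']
  · rw [smul_smul, mul_inv_cancel₀ h1t.ne', one_smul, sub_add_cancel]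

theorem exists_sub_smul_mem_smul_convexHull {E : Type*} [AddCommGroup E] [Module ℝ E]
    (v : ι → E) {t : ℝ} (ht : t ≤ (Fintype.card ι : ℝ)⁻¹) (ht1 : t < 1) {x : E}
    (hx : x ∈ convexHull ℝ (range v)) :
    ∃ i, x - t • v i ∈ (1 - t) • convexHull ℝ (range v) := by
  classical
  rw [convexHull_range_eq_image_stdSimplex] at hx ⊢
  obtain ⟨w, hw, rfl⟩ := hx
  obtain ⟨i, hi⟩ := exists_inv_card_le_of_mem_stdSimplex hw
  obtain ⟨w', hw', rfl⟩ := exists_mem_stdSimplex_eq_smul_add_single hw (ht.trans hi) ht1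
  refine ⟨i, _, mem_image_of_mem _ hw', ?_⟩
  rw [map_add, map_smul, map_smul, Fintype.linearCombination_apply_single, one_smul,
    add_sub_cancel_right]

end Simplex

section Normed

variable {E : Type*} [NormedAddCommGroup E] [NormedSpace ℝ E]

theorem Convex.ball_one_sub_smul_subset {K : Set E} (hK : Convex ℝ K) {ε : ℝ}
    (hε : ball 0 ε ⊆ K) {p : E} (hp : p ∈ K) {t : ℝ} (ht0 : 0 < t) (ht1 : t ≤ 1) :
    ball ((1 - t) • p) (t * ε) ⊆ K := by
  intro y hy
  have hq : t⁻¹ • (y - (1 - t) • p) ∈ K := by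
    refine hε ?_
    rw [mem_ball_zero_iff, norm_smul, norm_inv, Real.norm_of_nonneg ht0.le,
      inv_mul_lt_iff₀ ht0, ← dist_eq_norm]
    exact hy
  convert hK hp hq (sub_nonneg.2 ht1) ht0.le (by ring) using 1
  rw [smul_smul, mul_inv_cancel₀ ht0.ne', one_smul, add_sub_cancel]

theorem exists_ball_subset_image_add_interior_convexHull {ι : Type*} [Fintype ι] (v : ι → E)
    {ε : ℝ} (hε : ball 0 ε ⊆ convexHull ℝ (range v)) {t : ℝ} (ht0 : 0 < t)
    (ht : t ≤ (Fintype.card ι : ℝ)⁻¹) (ht1 : t < 1) {x : E} (hx : x ∈ convexHull ℝ (range v)) :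
    ∃ i, ball x (t * ε) ⊆ (fun y => y + t • v i) '' interior (convexHull ℝ (range v)) := by
  obtain ⟨i, p, hp, hpx⟩ := exists_sub_smul_mem_smul_convexHull v ht ht1 hx
  have hball : ball (x - t • v i) (t * ε) ⊆ interior (convexHull ℝ (range v)) :=
    interior_maximal (hpx ▸ (convex_convexHull ℝ _).ball_one_sub_smul_subset hε hp ht0 ht1.le)
      isOpen_ball
  refine ⟨i, fun y hy => ⟨y - t • v i, hball ?_, sub_add_cancel y _⟩⟩
  rwa [mem_ball, dist_sub_right]

theorem Bornology.IsBounded.nonempty_frontier [Nontrivial E] {U : Set E}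
    (hU : Bornology.IsBounded U) (hne : U.Nonempty) : (frontier U).Nonempty :=
  nonempty_frontier_iff.2 ⟨hne, fun h => NormedSpace.unbounded_univ ℝ E (h ▸ hU)⟩

end Normed

theorem Metric.le_infDist_frontier_of_ball_subset {X : Type*} [PseudoMetricSpace X] {U : Set X}
    {x : X} {r : ℝ} (hU : ball x r ⊆ U) (hne : (frontier U).Nonempty) :
    r ≤ infDist x (frontier U) := by
  refine (le_infDist hne).2 fun y hy => not_lt.1 fun hxy => ?_
  exact disjoint_interior_frontier.le_bot
    ⟨interior_maximal hU isOpen_ball (mem_ball'.2 hxy), hy⟩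

section ShrinkSet

variable {N : ℕ}

theorem mem_shrinkSet_of_ball_subset [Nontrivial (Euc N)] {U : Set (Euc N)}
    (hU : Bornology.IsBounded U) {x : Euc N} {r c : ℝ} (hr : 0 < r) (hxU : ball x r ⊆ U)
    (hc : c < r) : x ∈ shrinkSet U c :=
  have hx : x ∈ U := hxU (mem_ball_self hr)
  ⟨hx, hc.trans_le (le_infDist_frontier_of_ball_subset hxU (hU.nonempty_frontier ⟨x, hx⟩))⟩

theorem smul_mem_shrinkSet {U : Set (Euc N)} {x : Euc N} {c r : ℝ} (hr : 0 < r)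
    (hx : x ∈ shrinkSet U c) : r • x ∈ shrinkSet (r • U) (c * r) := by
  refine ⟨smul_mem_smul_set hx.1, ?_⟩
  rw [frontier, closure_smul₀' hr.ne', interior_smul₀ hr.ne', ← smul_set_sdiff₀ hr.ne',
    infDist_smul₀ hr.ne', Real.norm_of_nonneg hr.le, mul_comm c]
  exact mul_lt_mul_of_pos_left hx.2 hr

theorem image_add_smul_smul_set {E : Type*} [AddCommGroup E] [Module ℝ E] (Δ : Set E) (a : E)
    (t r : ℝ) :
    (fun x => x + (t * r) • a) '' (r • Δ) = r • ((fun x => x + t • a) '' Δ) := by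
  rw [← image_smul, ← image_smul, image_image, image_image]
  congr 1
  funext x
  rw [smul_add, smul_smul, mul_comm]

theorem closure_smul_subset_iUnion_shrinkSet {ι : Type*} {Δ : Set (Euc N)} {a : ι → Euc N}
    {t c : ℝ} (hcover : closure Δ ⊆ ⋃ i, shrinkSet ((fun x => x + t • a i) '' Δ) c)
    {r : ℝ} (hr : 0 < r) :
    closure (r • Δ) ⊆ ⋃ i, shrinkSet ((fun x => x + (t * r) • a i) '' (r • Δ)) (c * r) := by
  rw [closure_smul₀]
  rintro _ ⟨x, hx, rfl⟩
  obtain ⟨i, hi⟩ := mem_iUnion.1 (hcover hx)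
  exact mem_iUnion.2 ⟨i, image_add_smul_smul_set Δ (a i) t r ▸ smul_mem_shrinkSet hr hi⟩

end ShrinkSet

/-- Let `Δ` be the open convex hull of finitely many unit vectors
`v₁,…,v_m ⊂ ℝ^N` containing the origin in its interior. Then for all sufficiently small
`t > 0` there exists `c > 0` with `closure Δ ⊆ ⋃ᵢ (Δ + t vᵢ)_c`, and by invariance under
homothety, `closure (rΔ) ⊆ ⋃ᵢ (rΔ + tr vᵢ)_{cr}` for every `r > 0`. -/
theorem stmt14 (N m : ℕ) (v : Fin m → Euc N) (hunit : ∀ i, ‖v i‖ = 1)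
    (Δ : Set (Euc N)) (hΔ : Δ = interior (convexHull ℝ (Set.range v)))
    (h0 : (0 : Euc N) ∈ Δ) :
    ∃ t₀ : ℝ, 0 < t₀ ∧ ∀ t : ℝ, 0 < t → t < t₀ → ∃ c : ℝ, 0 < c ∧
      closure Δ ⊆ ⋃ i : Fin m, shrinkSet ((fun x => x + t • v i) '' Δ) c ∧
      ∀ r : ℝ, 0 < r →
        closure (r • Δ) ⊆
          ⋃ i : Fin m, shrinkSet ((fun x => x + (t * r) • v i) '' (r • Δ)) (c * r) := by
  subst hΔ
  obtain ⟨i₀⟩ : Nonempty (Fin m) := by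
    by_contra hempty
    rw [range_eq_empty_iff.2 (not_nonempty_iff.1 hempty), convexHull_empty, interior_empty] at h0
    exact h0
  set K := convexHull ℝ (range v)
  have hKcompact : IsCompact K := (finite_range v).isCompact_convexHull ℝ
  have hm : (1 : ℝ) ≤ m := by exact_mod_cast i₀.pos
  have : Nontrivial (Euc N) := nontrivial_of_ne (v i₀) 0 (norm_ne_zero_iff.1 (by simp [hunit]))
  obtain ⟨ε, hε, hball⟩ := isOpen_iff.1 isOpen_interior 0 h0
  refine ⟨(m : ℝ)⁻¹, by positivity, fun t ht htm => ⟨t * ε / 2, by positivity, ?_⟩⟩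
  have hcover : closure (interior K) ⊆ ⋃ i, shrinkSet ((fun x => x + t • v i) '' interior K)
      (t * ε / 2) := by
    intro x hx
    have hxK : x ∈ K := closure_minimal interior_subset hKcompact.isClosed hx
    obtain ⟨i, hi⟩ := exists_ball_subset_image_add_interior_convexHull v
      (hball.trans interior_subset) ht (by simpa using htm.le)
      (htm.trans_le (inv_le_one_of_one_le₀ hm)) hxK
    have hbdd : Bornology.IsBounded ((fun x => x + t • v i) '' interior K) :=
      (hKcompact.image (continuous_add_const _)).isBounded.subset (image_mono interior_subset)
    have htε : 0 < t * ε := mul_pos ht hε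
    exact mem_iUnion.2 ⟨i, mem_shrinkSet_of_ball_subset hbdd htε hi (by linarith)⟩
  exact ⟨hcover, fun r hr => closure_smul_subset_iUnion_shrinkSet hcover hr⟩
end
end
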